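/- arXiv:2303.00336 — 2 statements merged into one kernel-verified Lean document; each statement's English description precedes it below -/
import Mathlib

section
/- Let m > 0, κ > 0, λ > 0 and define K₀(I₁, I₂) = −(mκ²/2) γ(I₁, I₂)^{−2} with γ(I₁, I₂) = I₁ − I₂ + √m √(mI₂² − 2λ), on the open set O* = {(I₁, I₂) : mI₂² > 2λ, I₁ > I₂}. Then for every (I₁, I₂) ∈ O*: (i) det ∇²K₀(I₁, I₂) = 6λ m³ √m κ⁴ γ(I₁, I₂)^{−7} (mI₂² − 2λ)^{−3/2} > 0; (ii) ∂²K₀/∂I₁²(I₁, I₂) = −3mκ² γ(I₁, I₂)^{−4} < 0; and consequently (iii) the Hessian ∇²K₀(I₁, I₂) is negative definite. -/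
open Real Set Matrix

/-- `γ(I₁, I₂) = I₁ − I₂ + √m √(mI₂² − 2λ)`. -/
noncomputable def gammaLC (m lam I₁ I₂ : ℝ) : ℝ :=
  I₁ - I₂ + Real.sqrt m * Real.sqrt (m * I₂ ^ 2 - 2 * lam)

/-- The unperturbed Hamiltonian of the Kepler problem with Levi-Civita correction in
action variables: `K₀(I₁, I₂) = −(mκ²/2) γ(I₁, I₂)^{−2}`. -/
noncomputable def K0LC (m κ lam I₁ I₂ : ℝ) : ℝ :=
  -(m * κ ^ 2 / 2) / gammaLC m lam I₁ I₂ ^ 2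

/-- `∂²K₀/∂I₁²`. -/
noncomputable def K0LC₁₁ (m κ lam I₁ I₂ : ℝ) : ℝ :=
  deriv (deriv fun x => K0LC m κ lam x I₂) I₁

/-- `∂²K₀/∂I₂∂I₁`. -/
noncomputable def K0LC₁₂ (m κ lam I₁ I₂ : ℝ) : ℝ :=
  deriv (fun x => deriv (fun y => K0LC m κ lam x y) I₂) I₁

/-- `∂²K₀/∂I₁∂I₂`. -/
noncomputable def K0LC₂₁ (m κ lam I₁ I₂ : ℝ) : ℝ :=
  deriv (fun y => deriv (fun x => K0LC m κ lam x y) I₁) I₂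

/-- `∂²K₀/∂I₂²`. -/
noncomputable def K0LC₂₂ (m κ lam I₁ I₂ : ℝ) : ℝ :=
  deriv (deriv fun y => K0LC m κ lam I₁ y) I₂

open Filter Topology

lemma hasDerivAt_x (m κ lam I₂ : ℝ) (x : ℝ) (hx : gammaLC m lam x I₂ ≠ 0) :
    HasDerivAt (fun t => K0LC m κ lam t I₂) (m * κ ^ 2 / gammaLC m lam x I₂ ^ 3) x := by
  simp only [gammaLC] at hx ⊢
  have h1 : HasDerivAt
      (fun t : ℝ => t - I₂ + Real.sqrt m * Real.sqrt (m * I₂ ^ 2 - 2 * lam)) 1 x :=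
    ((hasDerivAt_id x).sub_const I₂).add_const _
  have h3 := (hasDerivAt_const x (-(m * κ ^ 2 / 2))).fun_div (h1.fun_pow 2) (pow_ne_zero 2 hx)
  refine h3.congr_deriv ?_
  norm_num only
  field_simp
  ring

lemma hasDerivAt_y (m κ lam x : ℝ) (y : ℝ) (hy : 0 < m * y ^ 2 - 2 * lam)
    (hγ : gammaLC m lam x y ≠ 0) :
    HasDerivAt (fun t => K0LC m κ lam x t)
      (m * κ ^ 2 * (-1 + Real.sqrt m * (m * y) / Real.sqrt (m * y ^ 2 - 2 * lam)) /
        gammaLC m lam x y ^ 3) y := by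
  have hs : Real.sqrt (m * y ^ 2 - 2 * lam) ≠ 0 := (Real.sqrt_pos.2 hy).ne'
  simp only [gammaLC] at hγ ⊢
  have hsq : HasDerivAt (fun t : ℝ => m * t ^ 2 - 2 * lam) (m * (2 * y ^ 1)) y :=
    ((hasDerivAt_pow 2 y).const_mul m).sub_const _
  have hsqrt := hsq.sqrt hy.ne'
  have hg : HasDerivAt
      (fun t : ℝ => x - t + Real.sqrt m * Real.sqrt (m * t ^ 2 - 2 * lam))
      (0 - 1 + Real.sqrt m * (m * (2 * y ^ 1) / (2 * Real.sqrt (m * y ^ 2 - 2 * lam)))) y :=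
    ((hasDerivAt_const y x).sub (hasDerivAt_id y)).add (hsqrt.const_mul _)
  have h3 := (hasDerivAt_const y (-(m * κ ^ 2 / 2))).fun_div (hg.fun_pow 2) (pow_ne_zero 2 hγ)
  refine h3.congr_deriv ?_
  norm_num only
  field_simp
  ring

private lemma negdef_aux (a b d v0 v1 : ℝ) (ha : a < 0) (hdet : 0 < a * d - b * b)
    (hv : v0 ≠ 0 ∨ v1 ≠ 0) :
    (a * v0 + b * v1) * v0 + (b * v0 + d * v1) * v1 < 0 := by
  rcases eq_or_ne v1 0 with h | h
  · subst h
    rcases hv with h0 | h0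
    · have h1 : 0 < v0 * v0 := mul_self_pos.2 h0
      nlinarith
    · simp at h0
  · have h1 : 0 < v1 * v1 := mul_self_pos.2 h
    nlinarith [sq_nonneg (a * v0 + b * v1), mul_pos hdet h1]

section
variable (m κ lam I₁ I₂ : ℝ)

lemma gam_pos (hm : 0 < m) (hlam : 0 < lam) (hI₂ : 2 * lam < m * I₂ ^ 2) (hI : I₂ < I₁) :
    0 < gammaLC m lam I₁ I₂ := by
  have h1 : 0 < Real.sqrt m := Real.sqrt_pos.2 hm
  have h2 : 0 < Real.sqrt (m * I₂ ^ 2 - 2 * lam) := Real.sqrt_pos.2 (by linarith)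
  have := mul_pos h1 h2
  simp only [gammaLC]
  linarith

lemma K11_eq (hm : 0 < m) (hlam : 0 < lam) (hI₂ : 2 * lam < m * I₂ ^ 2) (hI : I₂ < I₁) :
    deriv (deriv fun x => K0LC m κ lam x I₂) I₁ =
      -3 * m * κ ^ 2 / gammaLC m lam I₁ I₂ ^ 4 := by
  have hB : 0 < Real.sqrt m * Real.sqrt (m * I₂ ^ 2 - 2 * lam) :=
    mul_pos (Real.sqrt_pos.2 hm) (Real.sqrt_pos.2 (by linarith))
  have hev : (deriv fun x => K0LC m κ lam x I₂) =ᶠ[𝓝 I₁]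
      fun x => m * κ ^ 2 / gammaLC m lam x I₂ ^ 3 := by
    filter_upwards [Ioi_mem_nhds
      (show I₂ - Real.sqrt m * Real.sqrt (m * I₂ ^ 2 - 2 * lam) < I₁ by linarith)] with x hx
    have hgx : gammaLC m lam x I₂ ≠ 0 := by
      simp only [gammaLC]; simp only [mem_Ioi] at hx; nlinarith
    exact (hasDerivAt_x m κ lam I₂ x hgx).deriv
  rw [hev.deriv_eq]
  have hg := (gam_pos m lam I₁ I₂ hm hlam hI₂ hI).ne'
  simp only [gammaLC] at hg ⊢
  have h1 : HasDerivAt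
      (fun t : ℝ => t - I₂ + Real.sqrt m * Real.sqrt (m * I₂ ^ 2 - 2 * lam)) 1 I₁ :=
    ((hasDerivAt_id I₁).sub_const I₂).add_const _
  have h3 := (hasDerivAt_const I₁ (m * κ ^ 2)).fun_div (h1.fun_pow 3) (pow_ne_zero 3 hg)
  rw [h3.deriv]
  norm_num only
  field_simp
  ring

lemma K12_eq (hm : 0 < m) (hlam : 0 < lam) (hI₂ : 2 * lam < m * I₂ ^ 2) (hI : I₂ < I₁) :
    deriv (fun x => deriv (fun y => K0LC m κ lam x y) I₂) I₁ =
      -3 * m * κ ^ 2 * (-1 + Real.sqrt m * (m * I₂) / Real.sqrt (m * I₂ ^ 2 - 2 * lam)) /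
        gammaLC m lam I₁ I₂ ^ 4 := by
  have hB : 0 < Real.sqrt m * Real.sqrt (m * I₂ ^ 2 - 2 * lam) :=
    mul_pos (Real.sqrt_pos.2 hm) (Real.sqrt_pos.2 (by linarith))
  have hs : Real.sqrt (m * I₂ ^ 2 - 2 * lam) ≠ 0 := (Real.sqrt_pos.2 (by linarith)).ne'
  have hev : (fun x => deriv (fun y => K0LC m κ lam x y) I₂) =ᶠ[𝓝 I₁]
      fun x => m * κ ^ 2 * (-1 + Real.sqrt m * (m * I₂) / Real.sqrt (m * I₂ ^ 2 - 2 * lam)) /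
        gammaLC m lam x I₂ ^ 3 := by
    filter_upwards [Ioi_mem_nhds
      (show I₂ - Real.sqrt m * Real.sqrt (m * I₂ ^ 2 - 2 * lam) < I₁ by linarith)] with x hx
    have hgx : gammaLC m lam x I₂ ≠ 0 := by
      simp only [gammaLC]; simp only [mem_Ioi] at hx; nlinarith
    exact (hasDerivAt_y m κ lam x I₂ (by linarith) hgx).deriv
  rw [hev.deriv_eq]
  have hg := (gam_pos m lam I₁ I₂ hm hlam hI₂ hI).ne'
  simp only [gammaLC] at hg ⊢
  have h1 : HasDerivAt
      (fun t : ℝ => t - I₂ + Real.sqrt m * Real.sqrt (m * I₂ ^ 2 - 2 * lam)) 1 I₁ :=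
    ((hasDerivAt_id I₁).sub_const I₂).add_const _
  have h3 := (hasDerivAt_const I₁
      (m * κ ^ 2 * (-1 + Real.sqrt m * (m * I₂) / Real.sqrt (m * I₂ ^ 2 - 2 * lam)))).fun_div
      (h1.fun_pow 3) (pow_ne_zero 3 hg)
  rw [h3.deriv]
  norm_num only
  field_simp
  ring

lemma K21_eq (hm : 0 < m) (hlam : 0 < lam) (hI₂ : 2 * lam < m * I₂ ^ 2) (hI : I₂ < I₁) :
    deriv (fun y => deriv (fun x => K0LC m κ lam x y) I₁) I₂ =
      -3 * m * κ ^ 2 * (-1 + Real.sqrt m * (m * I₂) / Real.sqrt (m * I₂ ^ 2 - 2 * lam)) /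
        gammaLC m lam I₁ I₂ ^ 4 := by
  have hgpos := gam_pos m lam I₁ I₂ hm hlam hI₂ hI
  have hspos : 0 < Real.sqrt (m * I₂ ^ 2 - 2 * lam) := Real.sqrt_pos.2 (by linarith)
  have hcont : ContinuousAt (fun y => gammaLC m lam I₁ y) I₂ := by
    simp only [gammaLC]; fun_prop
  have hev : (fun y => deriv (fun x => K0LC m κ lam x y) I₁) =ᶠ[𝓝 I₂]
      fun y => m * κ ^ 2 / gammaLC m lam I₁ y ^ 3 := by
    filter_upwards [hcont.eventually (eventually_gt_nhds hgpos)] with y hy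
    exact (hasDerivAt_x m κ lam y I₁ hy.ne').deriv
  rw [hev.deriv_eq]
  have hg := hgpos.ne'
  simp only [gammaLC] at hg ⊢
  have hsq : HasDerivAt (fun t : ℝ => m * t ^ 2 - 2 * lam) (m * (2 * I₂ ^ 1)) I₂ :=
    ((hasDerivAt_pow 2 I₂).const_mul m).sub_const _
  have hsqrt := hsq.sqrt (show m * I₂ ^ 2 - 2 * lam ≠ 0 by linarith)
  have hgdot : HasDerivAt
      (fun t : ℝ => I₁ - t + Real.sqrt m * Real.sqrt (m * t ^ 2 - 2 * lam))
      (0 - 1 + Real.sqrt m * (m * (2 * I₂ ^ 1) / (2 * Real.sqrt (m * I₂ ^ 2 - 2 * lam)))) I₂ :=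
    ((hasDerivAt_const I₂ I₁).sub (hasDerivAt_id I₂)).add (hsqrt.const_mul _)
  have h3 := (hasDerivAt_const I₂ (m * κ ^ 2)).fun_div (hgdot.fun_pow 3) (pow_ne_zero 3 hg)
  rw [h3.deriv]
  norm_num only
  have hsne := hspos.ne'
  field_simp
  ring

lemma K22_eq (hm : 0 < m) (hlam : 0 < lam) (hI₂ : 2 * lam < m * I₂ ^ 2) (hI : I₂ < I₁) :
    deriv (deriv fun y => K0LC m κ lam I₁ y) I₂ =
      -3 * m * κ ^ 2 *
          (-1 + Real.sqrt m * (m * I₂) / Real.sqrt (m * I₂ ^ 2 - 2 * lam)) ^ 2 /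
          gammaLC m lam I₁ I₂ ^ 4 +
        m * κ ^ 2 * (Real.sqrt m * m * (Real.sqrt (m * I₂ ^ 2 - 2 * lam) ^ 2 - m * I₂ ^ 2)) /
          (Real.sqrt (m * I₂ ^ 2 - 2 * lam) ^ 3 * gammaLC m lam I₁ I₂ ^ 3) := by
  have hgpos := gam_pos m lam I₁ I₂ hm hlam hI₂ hI
  have hspos : 0 < Real.sqrt (m * I₂ ^ 2 - 2 * lam) := Real.sqrt_pos.2 (by linarith)
  have hcont : ContinuousAt (fun y => gammaLC m lam I₁ y) I₂ := by
    simp only [gammaLC]; fun_prop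
  have hcont2 : ContinuousAt (fun y : ℝ => m * y ^ 2 - 2 * lam) I₂ := by fun_prop
  have hev : (deriv fun y => K0LC m κ lam I₁ y) =ᶠ[𝓝 I₂]
      fun y => m * κ ^ 2 * (-1 + Real.sqrt m * (m * y) / Real.sqrt (m * y ^ 2 - 2 * lam)) /
        gammaLC m lam I₁ y ^ 3 := by
    filter_upwards [hcont.eventually (eventually_gt_nhds hgpos),
      hcont2.eventually (eventually_gt_nhds (show (0:ℝ) < m * I₂ ^ 2 - 2 * lam by linarith))]
      with y hy1 hy2
    exact (hasDerivAt_y m κ lam I₁ y hy2 hy1.ne').deriv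
  rw [hev.deriv_eq]
  have hg := hgpos.ne'
  have hsne := hspos.ne'
  simp only [gammaLC] at hg ⊢
  have hsq : HasDerivAt (fun t : ℝ => m * t ^ 2 - 2 * lam) (m * (2 * I₂ ^ 1)) I₂ :=
    ((hasDerivAt_pow 2 I₂).const_mul m).sub_const _
  have hsqrt := hsq.sqrt (show m * I₂ ^ 2 - 2 * lam ≠ 0 by linarith)
  have hq := ((((hasDerivAt_id I₂).const_mul m).const_mul (Real.sqrt m)).fun_div hsqrt hsne)
  have hN := (hq.const_add (-1)).const_mul (m * κ ^ 2)
  have hgdot : HasDerivAt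
      (fun t : ℝ => I₁ - t + Real.sqrt m * Real.sqrt (m * t ^ 2 - 2 * lam))
      (0 - 1 + Real.sqrt m * (m * (2 * I₂ ^ 1) / (2 * Real.sqrt (m * I₂ ^ 2 - 2 * lam)))) I₂ :=
    ((hasDerivAt_const I₂ I₁).sub (hasDerivAt_id I₂)).add (hsqrt.const_mul _)
  have hF := hN.fun_div (hgdot.fun_pow 3) (pow_ne_zero 3 hg)
  simp only [id_eq] at hF
  rw [hF.deriv]
  norm_num only
  field_simp
  ring

end

/-- On `O* = {mI₂² > 2λ, I₁ > I₂}`: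
(i) `det ∇²K₀ = 6λ m³ √m κ⁴ γ^{−7} (mI₂² − 2λ)^{−3/2} > 0`;
(ii) `∂²K₀/∂I₁² = −3mκ² γ^{−4} < 0`; consequently
(iii) the Hessian `∇²K₀(I₁, I₂)` is negative definite. -/
theorem hessian_K0LC_negDef (m κ lam I₁ I₂ : ℝ) (hm : 0 < m) (hκ : 0 < κ) (hlam : 0 < lam)
    (hI₂ : 2 * lam < m * I₂ ^ 2) (hI : I₂ < I₁) :
    (K0LC₁₁ m κ lam I₁ I₂ * K0LC₂₂ m κ lam I₁ I₂ -
        K0LC₁₂ m κ lam I₁ I₂ * K0LC₂₁ m κ lam I₁ I₂ =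
          6 * lam * m ^ 3 * Real.sqrt m * κ ^ 4 /
            (gammaLC m lam I₁ I₂ ^ 7 * (m * I₂ ^ 2 - 2 * lam) ^ ((3 : ℝ) / 2)) ∧
      0 < 6 * lam * m ^ 3 * Real.sqrt m * κ ^ 4 /
            (gammaLC m lam I₁ I₂ ^ 7 * (m * I₂ ^ 2 - 2 * lam) ^ ((3 : ℝ) / 2))) ∧
    (K0LC₁₁ m κ lam I₁ I₂ = -3 * m * κ ^ 2 / gammaLC m lam I₁ I₂ ^ 4 ∧
      K0LC₁₁ m κ lam I₁ I₂ < 0) ∧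
    (∀ v : Fin 2 → ℝ, v ≠ 0 →
      ((!![K0LC₁₁ m κ lam I₁ I₂, K0LC₁₂ m κ lam I₁ I₂;
           K0LC₂₁ m κ lam I₁ I₂, K0LC₂₂ m κ lam I₁ I₂] :
          Matrix (Fin 2) (Fin 2) ℝ).mulVec v) ⬝ᵥ v < 0) := by
  have hgpos : 0 < gammaLC m lam I₁ I₂ := gam_pos m lam I₁ I₂ hm hlam hI₂ hI
  have hspos : 0 < Real.sqrt (m * I₂ ^ 2 - 2 * lam) := Real.sqrt_pos.2 (by linarith)
  have hsm : 0 < Real.sqrt m := Real.sqrt_pos.2 hm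
  have hs2 : Real.sqrt (m * I₂ ^ 2 - 2 * lam) ^ 2 = m * I₂ ^ 2 - 2 * lam :=
    Real.sq_sqrt (by linarith)
  have h11 : K0LC₁₁ m κ lam I₁ I₂ = -3 * m * κ ^ 2 / gammaLC m lam I₁ I₂ ^ 4 :=
    K11_eq m κ lam I₁ I₂ hm hlam hI₂ hI
  have h12 : K0LC₁₂ m κ lam I₁ I₂ =
      -3 * m * κ ^ 2 * (-1 + Real.sqrt m * (m * I₂) / Real.sqrt (m * I₂ ^ 2 - 2 * lam)) /
        gammaLC m lam I₁ I₂ ^ 4 := K12_eq m κ lam I₁ I₂ hm hlam hI₂ hI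
  have h21 : K0LC₂₁ m κ lam I₁ I₂ =
      -3 * m * κ ^ 2 * (-1 + Real.sqrt m * (m * I₂) / Real.sqrt (m * I₂ ^ 2 - 2 * lam)) /
        gammaLC m lam I₁ I₂ ^ 4 := K21_eq m κ lam I₁ I₂ hm hlam hI₂ hI
  have h22 : K0LC₂₂ m κ lam I₁ I₂ =
      -3 * m * κ ^ 2 *
          (-1 + Real.sqrt m * (m * I₂) / Real.sqrt (m * I₂ ^ 2 - 2 * lam)) ^ 2 /
          gammaLC m lam I₁ I₂ ^ 4 +
        m * κ ^ 2 * (Real.sqrt m * m * (Real.sqrt (m * I₂ ^ 2 - 2 * lam) ^ 2 - m * I₂ ^ 2)) /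
          (Real.sqrt (m * I₂ ^ 2 - 2 * lam) ^ 3 * gammaLC m lam I₁ I₂ ^ 3) :=
    K22_eq m κ lam I₁ I₂ hm hlam hI₂ hI
  rw [hs2] at h22
  have hrpow : (m * I₂ ^ 2 - 2 * lam) ^ ((3 : ℝ) / 2) =
      Real.sqrt (m * I₂ ^ 2 - 2 * lam) ^ 3 := by
    rw [Real.sqrt_eq_rpow, ← Real.rpow_natCast ((m * I₂ ^ 2 - 2 * lam) ^ ((1:ℝ)/2)) 3,
      ← Real.rpow_mul (by linarith)]
    norm_num
  have hdet : K0LC₁₁ m κ lam I₁ I₂ * K0LC₂₂ m κ lam I₁ I₂ -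
      K0LC₁₂ m κ lam I₁ I₂ * K0LC₂₁ m κ lam I₁ I₂ =
        6 * lam * m ^ 3 * Real.sqrt m * κ ^ 4 /
          (gammaLC m lam I₁ I₂ ^ 7 * (m * I₂ ^ 2 - 2 * lam) ^ ((3 : ℝ) / 2)) := by
    rw [h11, h22, h12, h21, hrpow]
    have hg := hgpos.ne'
    have hs := hspos.ne'
    field_simp
    ring
  have hpos : 0 < 6 * lam * m ^ 3 * Real.sqrt m * κ ^ 4 /
      (gammaLC m lam I₁ I₂ ^ 7 * (m * I₂ ^ 2 - 2 * lam) ^ ((3 : ℝ) / 2)) := by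
    apply div_pos
    · exact mul_pos (mul_pos (mul_pos (by linarith) (pow_pos hm 3)) hsm) (pow_pos hκ 4)
    · exact mul_pos (pow_pos hgpos 7) (Real.rpow_pos_of_pos (by linarith) _)
  have h11neg : K0LC₁₁ m κ lam I₁ I₂ < 0 := by
    rw [h11]
    apply div_neg_of_neg_of_pos
    · nlinarith [mul_pos hm (pow_pos hκ 2)]
    · exact pow_pos hgpos 4
  refine ⟨⟨hdet, hpos⟩, ⟨h11, h11neg⟩, ?_⟩
  intro v hv
  have hb : K0LC₁₂ m κ lam I₁ I₂ = K0LC₂₁ m κ lam I₁ I₂ := by rw [h12, h21]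
  have h0 : 0 < K0LC₁₁ m κ lam I₁ I₂ * K0LC₂₂ m κ lam I₁ I₂ -
      K0LC₁₂ m κ lam I₁ I₂ * K0LC₂₁ m κ lam I₁ I₂ := by
    rw [hdet]; exact hpos
  rw [hb] at h0
  have hv' : v 0 ≠ 0 ∨ v 1 ≠ 0 := by
    by_contra h
    push_neg at h
    exact hv (funext fun i => by fin_cases i <;> simp [h.1, h.2])
  simp only [Matrix.mulVec, dotProduct, Fin.sum_univ_two, Matrix.cons_val',
    Matrix.cons_val_zero, Matrix.cons_val_one, Matrix.head_cons, Matrix.empty_val',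
    Matrix.cons_val_fin_one, Matrix.head_fin_const]
  rw [hb]
  exact negdef_aux _ _ _ _ _ h11neg h0 hv'
end

section
/- Let m > 0, κ > 0, λ > 0 and define K₀(I₁, I₂) = −(mκ²/2) γ(I₁, I₂)^{−2} with γ(I₁, I₂) = I₁ − I₂ + √m √(mI₂² − 2λ), on the open set O* = {(I₁, I₂) : mI₂² > 2λ, I₁ > I₂}. Then for every (I₁, I₂) ∈ O*, the isoenergetic non-degeneracy condition holds: the determinant of the 3×3 bordered matrix [[∇²K₀(I₁, I₂), ∇K₀(I₁, I₂)ᵀ],[∇K₀(I₁, I₂), 0]] is nonzero. -/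
open Real Set Matrix

/-- `∂K₀/∂I₁`. -/
noncomputable def K0LC₁ (m κ lam I₁ I₂ : ℝ) : ℝ :=
  deriv (fun x => K0LC m κ lam x I₂) I₁

/-- `∂K₀/∂I₂`. -/
noncomputable def K0LC₂ (m κ lam I₁ I₂ : ℝ) : ℝ :=
  deriv (fun y => K0LC m κ lam I₁ y) I₂

noncomputable def g2fun (m lam y : ℝ) : ℝ :=
  -1 + Real.sqrt m * (m * y / Real.sqrt (m * y ^ 2 - 2 * lam))

lemma hasDerivAt_gamma_x (m lam I₂ : ℝ) (x : ℝ) :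
    HasDerivAt (fun x => gammaLC m lam x I₂) 1 x := by
  unfold gammaLC
  simpa using ((hasDerivAt_id x).sub_const I₂).add_const
    (Real.sqrt m * Real.sqrt (m * I₂ ^ 2 - 2 * lam))

lemma hasDerivAt_K0_x (m κ lam I₂ : ℝ) {x : ℝ} (hγ : gammaLC m lam x I₂ ≠ 0) :
    HasDerivAt (fun x => K0LC m κ lam x I₂) (m * κ ^ 2 / gammaLC m lam x I₂ ^ 3) x := by
  have h2 := (((hasDerivAt_gamma_x m lam I₂ x).pow 2).inv (pow_ne_zero 2 hγ)).const_mul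
    (-(m * κ ^ 2 / 2))
  have hfe : (fun x => K0LC m κ lam x I₂)
      = fun x => -(m * κ ^ 2 / 2) * (gammaLC m lam x I₂ ^ 2)⁻¹ := by
    funext x; unfold K0LC; ring
  rw [hfe]
  refine h2.congr_deriv ?_
  simp only [Pi.pow_apply]
  field_simp; ring

lemma hasDerivAt_sqrt_s (m lam : ℝ) {y : ℝ} (hs : m * y ^ 2 - 2 * lam ≠ 0) :
    HasDerivAt (fun y => Real.sqrt (m * y ^ 2 - 2 * lam))
      (m * (2 * y ^ 1) / (2 * Real.sqrt (m * y ^ 2 - 2 * lam))) y :=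
  (((hasDerivAt_pow 2 y).const_mul m).sub_const (2 * lam)).sqrt hs

lemma hasDerivAt_gamma_y (m lam I₁ : ℝ) {y : ℝ} (hs : 0 < m * y ^ 2 - 2 * lam) :
    HasDerivAt (fun y => gammaLC m lam I₁ y) (g2fun m lam y) y := by
  have hr : Real.sqrt (m * y ^ 2 - 2 * lam) ≠ 0 := by positivity
  have h := ((hasDerivAt_id y).const_sub I₁).add
    ((hasDerivAt_sqrt_s m lam hs.ne').const_mul (Real.sqrt m))
  have hfe : (fun y => gammaLC m lam I₁ y)
      = fun y => (I₁ - y) + Real.sqrt m * Real.sqrt (m * y ^ 2 - 2 * lam) := by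
    funext y; unfold gammaLC; ring
  rw [hfe]
  refine h.congr_deriv ?_
  unfold g2fun
  field_simp

lemma hasDerivAt_K0_y (m κ lam I₁ : ℝ) {y : ℝ} (hs : 0 < m * y ^ 2 - 2 * lam)
    (hγ : gammaLC m lam I₁ y ≠ 0) :
    HasDerivAt (fun y => K0LC m κ lam I₁ y)
      (m * κ ^ 2 * g2fun m lam y / gammaLC m lam I₁ y ^ 3) y := by
  have h2 := (((hasDerivAt_gamma_y m lam I₁ hs).pow 2).inv (pow_ne_zero 2 hγ)).const_mul
    (-(m * κ ^ 2 / 2))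
  have hfe : (fun y => K0LC m κ lam I₁ y)
      = fun y => -(m * κ ^ 2 / 2) * (gammaLC m lam I₁ y ^ 2)⁻¹ := by
    funext y; unfold K0LC; ring
  rw [hfe]
  refine h2.congr_deriv ?_
  simp only [Pi.pow_apply]
  field_simp; ring

/-- On `O* = {mI₂² > 2λ, I₁ > I₂}` the isoenergetic non-degeneracy
condition holds: the determinant of the bordered matrix
`[[∇²K₀, ∇K₀ᵀ], [∇K₀, 0]]` is nonzero. -/
theorem isoenergetic_nondeg_LC (m κ lam I₁ I₂ : ℝ) (hm : 0 < m) (hκ : 0 < κ)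
    (hlam : 0 < lam) (hI₂ : 2 * lam < m * I₂ ^ 2) (hI : I₂ < I₁) :
    (!![K0LC₁₁ m κ lam I₁ I₂, K0LC₁₂ m κ lam I₁ I₂, K0LC₁ m κ lam I₁ I₂;
        K0LC₂₁ m κ lam I₁ I₂, K0LC₂₂ m κ lam I₁ I₂, K0LC₂ m κ lam I₁ I₂;
        K0LC₁ m κ lam I₁ I₂,  K0LC₂ m κ lam I₁ I₂,  0] :
      Matrix (Fin 3) (Fin 3) ℝ).det ≠ 0 := by
  have hs : 0 < m * I₂ ^ 2 - 2 * lam := by linarith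
  set r : ℝ := Real.sqrt (m * I₂ ^ 2 - 2 * lam) with hrdef
  have hr : 0 < r := Real.sqrt_pos.mpr hs
  have hr2 : r ^ 2 = m * I₂ ^ 2 - 2 * lam := Real.sq_sqrt hs.le
  have hsm : 0 < Real.sqrt m := Real.sqrt_pos.mpr hm
  have hγpos : 0 < gammaLC m lam I₁ I₂ := by
    unfold gammaLC
    have : 0 < I₁ - I₂ := by linarith
    positivity
  set γ : ℝ := gammaLC m lam I₁ I₂ with hγdef
  set g : ℝ := g2fun m lam I₂ with hgdef
  have c1 : Continuous fun x => gammaLC m lam x I₂ := by unfold gammaLC; fun_prop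
  have c2 : Continuous fun y => gammaLC m lam I₁ y := by unfold gammaLC; fun_prop
  have c3 : Continuous fun y : ℝ => m * y ^ 2 - 2 * lam := by fun_prop
  have hU1 : ∀ᶠ x in nhds I₁, 0 < gammaLC m lam x I₂ :=
    (isOpen_lt continuous_const c1).eventually_mem (by simpa using hγpos)
  have hU2γ : ∀ᶠ y in nhds I₂, 0 < gammaLC m lam I₁ y :=
    (isOpen_lt continuous_const c2).eventually_mem (by simpa using hγpos)
  have hU2s : ∀ᶠ y in nhds I₂, 0 < m * y ^ 2 - 2 * lam :=
    (isOpen_lt continuous_const c3).eventually_mem (by simpa using hs)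
  -- first derivatives
  have e1 : K0LC₁ m κ lam I₁ I₂ = m * κ ^ 2 / γ ^ 3 :=
    (hasDerivAt_K0_x m κ lam I₂ hγpos.ne').deriv
  have e2 : K0LC₂ m κ lam I₁ I₂ = m * κ ^ 2 * g / γ ^ 3 :=
    (hasDerivAt_K0_y m κ lam I₁ hs hγpos.ne').deriv
  -- K11
  have hEv1 : (deriv fun x => K0LC m κ lam x I₂) =ᶠ[nhds I₁]
      fun x => m * κ ^ 2 * (gammaLC m lam x I₂ ^ 3)⁻¹ := by
    filter_upwards [hU1] with x hx
    rw [(hasDerivAt_K0_x m κ lam I₂ hx.ne').deriv]; ring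
  have e11 : K0LC₁₁ m κ lam I₁ I₂ = -(3 * (m * κ ^ 2)) / γ ^ 4 := by
    have hD := ((((hasDerivAt_gamma_x m lam I₂ I₁).pow 3).inv
      (pow_ne_zero 3 hγpos.ne')).const_mul (m * κ ^ 2)).deriv
    show deriv (deriv fun x => K0LC m κ lam x I₂) I₁ = _
    rw [hEv1.deriv_eq]; simp only [Pi.inv_apply, Pi.pow_apply, ← hγdef, ← hgdef] at hD; rw [hD]
    field_simp; ring
  -- K12
  have hEv12 : (fun x => deriv (fun y => K0LC m κ lam x y) I₂) =ᶠ[nhds I₁]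
      fun x => m * κ ^ 2 * g * (gammaLC m lam x I₂ ^ 3)⁻¹ := by
    filter_upwards [hU1] with x hx
    rw [(hasDerivAt_K0_y m κ lam x hs hx.ne').deriv]; rw [hgdef]; ring
  have e12 : K0LC₁₂ m κ lam I₁ I₂ = -(3 * (m * κ ^ 2) * g) / γ ^ 4 := by
    have hD := ((((hasDerivAt_gamma_x m lam I₂ I₁).pow 3).inv
      (pow_ne_zero 3 hγpos.ne')).const_mul (m * κ ^ 2 * g)).deriv
    show deriv (fun x => deriv (fun y => K0LC m κ lam x y) I₂) I₁ = _
    rw [hEv12.deriv_eq]; simp only [Pi.inv_apply, Pi.pow_apply, ← hγdef, ← hgdef] at hD; rw [hD]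
    field_simp; ring
  -- K21
  have hEv21 : (fun y => deriv (fun x => K0LC m κ lam x y) I₁) =ᶠ[nhds I₂]
      fun y => m * κ ^ 2 * (gammaLC m lam I₁ y ^ 3)⁻¹ := by
    filter_upwards [hU2γ] with y hy
    rw [(hasDerivAt_K0_x m κ lam y hy.ne').deriv]; ring
  have e21 : K0LC₂₁ m κ lam I₁ I₂ = -(3 * (m * κ ^ 2) * g) / γ ^ 4 := by
    have hD := ((((hasDerivAt_gamma_y m lam I₁ hs).pow 3).inv
      (pow_ne_zero 3 hγpos.ne')).const_mul (m * κ ^ 2)).deriv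
    show deriv (fun y => deriv (fun x => K0LC m κ lam x y) I₁) I₂ = _
    rw [hEv21.deriv_eq]; simp only [Pi.inv_apply, Pi.pow_apply, ← hγdef, ← hgdef] at hD; rw [hD]
    field_simp; ring
  -- K22
  have hEv2 : (deriv fun y => K0LC m κ lam I₁ y) =ᶠ[nhds I₂]
      fun y => m * κ ^ 2 * g2fun m lam y * (gammaLC m lam I₁ y ^ 3)⁻¹ := by
    filter_upwards [hU2s, hU2γ] with y h1 h2
    rw [(hasDerivAt_K0_y m κ lam I₁ h1 h2.ne').deriv]; ring
  have hg2 : HasDerivAt (fun y => g2fun m lam y)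
      (Real.sqrt m * ((m * r - m * I₂ * (m * (2 * I₂ ^ 1) / (2 * r))) / r ^ 2)) I₂ := by
    have hnum : HasDerivAt (fun y : ℝ => m * y) m I₂ := by
      simpa using (hasDerivAt_id I₂).const_mul m
    have hq := hnum.div (hasDerivAt_sqrt_s m lam hs.ne') hr.ne'
    have h := (hq.const_mul (Real.sqrt m)).const_add (-1)
    have hfe : (fun y => g2fun m lam y) = fun y =>
        -1 + Real.sqrt m * (m * y / Real.sqrt (m * y ^ 2 - 2 * lam)) := by
      funext y; unfold g2fun; ring
    rw [hfe]
    exact h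
  have hG : Real.sqrt m * ((m * r - m * I₂ * (m * (2 * I₂ ^ 1) / (2 * r))) / r ^ 2)
      = -(2 * lam) * m * Real.sqrt m / r ^ 3 := by
    have h0 : m * r - m * I₂ * (m * (2 * I₂ ^ 1) / (2 * r)) = -(2 * lam) * m / r := by
      field_simp
      linear_combination hr2
    rw [h0]
    field_simp
  have e22 : K0LC₂₂ m κ lam I₁ I₂ =
      m * κ ^ 2 * (-(2 * lam) * m * Real.sqrt m / r ^ 3) / γ ^ 3
        - 3 * (m * κ ^ 2) * g ^ 2 / γ ^ 4 := by
    have hD := ((hg2.const_mul (m * κ ^ 2)).mul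
      (((hasDerivAt_gamma_y m lam I₁ hs).pow 3).inv (pow_ne_zero 3 hγpos.ne'))).deriv
    show deriv (deriv fun y => K0LC m κ lam I₁ y) I₂ = _
    rw [hEv2.deriv_eq]
    rw [show (fun y => m * κ ^ 2 * g2fun m lam y * (gammaLC m lam I₁ y ^ 3)⁻¹)
        = fun y => (fun y => m * κ ^ 2 * g2fun m lam y) y
            * (fun y => (gammaLC m lam I₁ y ^ 3)⁻¹) y from rfl]
    simp only [Pi.mul_def, Pi.inv_def, Pi.pow_def] at hD
    beta_reduce
    rw [hD, hG]
    rw [← hgdef, ← hγdef]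
    field_simp
    ring
  rw [Matrix.det_fin_three]
  simp only [Matrix.of_apply, Matrix.cons_val', Matrix.cons_val_zero, Matrix.cons_val_one,
    Matrix.head_cons, Matrix.cons_val_two, Matrix.tail_cons, Matrix.empty_val',
    Matrix.cons_val_fin_one, Matrix.head_fin_const]
  rw [e1, e2, e11, e12, e21, e22]
  have hγne : γ ≠ 0 := hγpos.ne'
  have hrne : r ≠ 0 := hr.ne'
  have key : -(3 * (m * κ ^ 2)) / γ ^ 4 *
          (m * κ ^ 2 * (-(2 * lam) * m * Real.sqrt m / r ^ 3) / γ ^ 3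
            - 3 * (m * κ ^ 2) * g ^ 2 / γ ^ 4) * 0 -
        -(3 * (m * κ ^ 2)) / γ ^ 4 * (m * κ ^ 2 * g / γ ^ 3) * (m * κ ^ 2 * g / γ ^ 3) -
        -(3 * (m * κ ^ 2) * g) / γ ^ 4 * (-(3 * (m * κ ^ 2) * g) / γ ^ 4) * 0 +
        -(3 * (m * κ ^ 2) * g) / γ ^ 4 * (m * κ ^ 2 * g / γ ^ 3) * (m * κ ^ 2 / γ ^ 3) +
        m * κ ^ 2 / γ ^ 3 * (-(3 * (m * κ ^ 2) * g) / γ ^ 4) * (m * κ ^ 2 * g / γ ^ 3) -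
        m * κ ^ 2 / γ ^ 3 *
          (m * κ ^ 2 * (-(2 * lam) * m * Real.sqrt m / r ^ 3) / γ ^ 3
            - 3 * (m * κ ^ 2) * g ^ 2 / γ ^ 4) * (m * κ ^ 2 / γ ^ 3)
      = (m * κ ^ 2) ^ 3 * (2 * lam * m * Real.sqrt m) / (γ ^ 9 * r ^ 3) := by
    field_simp
    ring
  rw [key]
  positivity
end
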